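/- Let Φ be an n×d matrix, s₁, s₂ disjoint index sets with δ_{k₁+k₂} ≤ 1/2 where k_i = |s_i|. Then (1 − δ_{k₁} − δ_{k₁+k₂}²/(1 − δ_{k₂})) I_{k₁} ⪯ Φ_{s₁}ᵀ(I − P{Φ_{s₂}})Φ_{s₁} ⪯ (1 + δ_{k₁}) I_{k₁}. -/

import Mathlib

open Matrix Finset

noncomputable section

/-- Number of nonzero entries of a vector. -/
def sparsity {d : ℕ} (x : Fin d → ℝ) : ℕ :=
  (Finset.univ.filter fun i => x i ≠ 0).card

/-- Squared Euclidean norm. -/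
def nsq {k : Type*} [Fintype k] (v : k → ℝ) : ℝ := ∑ i, v i ^ 2

/-- Euclidean (ℓ₂) norm. -/
def l2 {k : Type*} [Fintype k] (v : k → ℝ) : ℝ := Real.sqrt (nsq v)

/-- `Φ` satisfies the order-`t` restricted isometry property with constant `δ`. -/
def satRIP {n d : ℕ} (Φ : Matrix (Fin n) (Fin d) ℝ) (t : ℕ) (δ : ℝ) : Prop :=
  ∀ x : Fin d → ℝ, sparsity x ≤ t →
    (1 - δ) * nsq x ≤ nsq (Φ.mulVec x) ∧ nsq (Φ.mulVec x) ≤ (1 + δ) * nsq x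

/-- The order-`t` RIP constant of `Φ` : the smallest `δ ≥ 0` satisfying the RIP bounds. -/
def ripConst {n d : ℕ} (Φ : Matrix (Fin n) (Fin d) ℝ) (t : ℕ) : ℝ :=
  sInf {δ : ℝ | 0 ≤ δ ∧ satRIP Φ t δ}

/-- The submatrix of `Φ` consisting of the columns indexed by `s`. -/
def cols {n d : ℕ} (Φ : Matrix (Fin n) (Fin d) ℝ) (s : Finset (Fin d)) :
    Matrix (Fin n) {i // i ∈ s} ℝ := Φ.submatrix id (fun i => (i : Fin d))

/-- Orthogonal projection `P{Φ_s} = Φ_s (Φ_sᵀ Φ_s)⁻¹ Φ_sᵀ` onto the column span of `Φ_s`. -/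
def proj {n d : ℕ} (Φ : Matrix (Fin n) (Fin d) ℝ) (s : Finset (Fin d)) :
    Matrix (Fin n) (Fin n) ℝ :=
  cols Φ s * ((cols Φ s)ᵀ * cols Φ s)⁻¹ * (cols Φ s)ᵀ

/-- Least-squares residual `v^{⊥s} = (I - P{Φ_s}) v`. -/
def residVec {n d : ℕ} (Φ : Matrix (Fin n) (Fin d) ℝ) (s : Finset (Fin d)) (y : Fin n → ℝ) :
    Fin n → ℝ := y - (proj Φ s).mulVec y

/-- The `i`-th column of `Φ`. -/
def col {n d : ℕ} (Φ : Matrix (Fin n) (Fin d) ℝ) (i : Fin d) : Fin n → ℝ := fun k => Φ k i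

/-- `x` is a least-squares estimate of `y` supported on `s`:
it is supported on `s` and minimizes `‖y - Φ z‖₂` over all `z` supported on `s`. -/
def leastSq {n d : ℕ} (Φ : Matrix (Fin n) (Fin d) ℝ) (y : Fin n → ℝ) (s : Finset (Fin d))
    (x : Fin d → ℝ) : Prop :=
  (∀ i, i ∉ s → x i = 0) ∧
  ∀ z : Fin d → ℝ, (∀ i, i ∉ s → z i = 0) → nsq (y - Φ.mulVec x) ≤ nsq (y - Φ.mulVec z)

/-- The support of a vector, as a `Finset`. -/
def spt {d : ℕ} (x : Fin d → ℝ) : Finset (Fin d) :=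
  Finset.univ.filter fun i => x i ≠ 0

/-!
For `x` supported on `s₁` put `w = Φ_{s₂}ᵀ Φ_{s₁} x`; then
`xᵀ Φ_{s₁}ᵀ (I - P) Φ_{s₁} x = ‖Φ_{s₁} x‖² - wᵀ (Φ_{s₂}ᵀ Φ_{s₂})⁻¹ w`.
The subtracted term is nonnegative, which gives the upper bound together with the RIP of
order `k₁`. For the lower bound, the RIP of order `k₂` gives `Φ_{s₂}ᵀ Φ_{s₂} ⪰ (1 - δ_{k₂}) I`, so
the subtracted term is at most `‖w‖² / (1 - δ_{k₂})`, and polarization of the RIP of order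
`k₁ + k₂` on the disjoint supports gives `‖w‖² = ⟨Φ_{s₁} x, Φ_{s₂} w⟩ ≤ δ_{k₁+k₂} ‖x‖ ‖w‖`.
-/

lemma nsq_eq_dotProduct {k : Type*} [Fintype k] (v : k → ℝ) : nsq v = v ⬝ᵥ v := by
  simp only [nsq, dotProduct, sq]

lemma nsq_nonneg {k : Type*} [Fintype k] (v : k → ℝ) : 0 ≤ nsq v :=
  sum_nonneg fun _ _ => sq_nonneg _

lemma nsq_eq_zero_iff {k : Type*} [Fintype k] {v : k → ℝ} : nsq v = 0 ↔ v = 0 := by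
  rw [nsq_eq_dotProduct, dotProduct_self_eq_zero]

lemma nsq_smul {k : Type*} [Fintype k] (c : ℝ) (v : k → ℝ) : nsq (c • v) = c ^ 2 * nsq v := by
  simp only [nsq_eq_dotProduct, smul_dotProduct, dotProduct_smul, smul_eq_mul]
  ring

lemma l2_sq {k : Type*} [Fintype k] (v : k → ℝ) : l2 v ^ 2 = nsq v :=
  Real.sq_sqrt (nsq_nonneg v)

lemma l2_nonneg {k : Type*} [Fintype k] (v : k → ℝ) : 0 ≤ l2 v := Real.sqrt_nonneg _

lemma l2_eq_zero_iff {k : Type*} [Fintype k] {v : k → ℝ} : l2 v = 0 ↔ v = 0 := by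
  rw [l2, Real.sqrt_eq_zero (nsq_nonneg v), nsq_eq_zero_iff]

lemma dotProduct_le_l2_mul_l2 {k : Type*} [Fintype k] (u v : k → ℝ) :
    u ⬝ᵥ v ≤ l2 u * l2 v :=
  Real.sum_mul_le_sqrt_mul_sqrt univ u v

lemma nsq_add_sub_nsq_sub {k : Type*} [Fintype k] (u v : k → ℝ) :
    nsq (u + v) - nsq (u - v) = 4 * (u ⬝ᵥ v) := by
  simp only [nsq_eq_dotProduct, add_dotProduct, dotProduct_add, sub_dotProduct,
    dotProduct_sub, dotProduct_comm v u]
  ring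

lemma nsq_add_add_nsq_sub {k : Type*} [Fintype k] (u v : k → ℝ) :
    nsq (u + v) + nsq (u - v) = 2 * (nsq u + nsq v) := by
  simp only [nsq_eq_dotProduct, add_dotProduct, dotProduct_add, sub_dotProduct,
    dotProduct_sub, dotProduct_comm v u]
  ring

lemma nsq_mulVec_le {m k : Type*} [Fintype m] [Fintype k] (A : Matrix m k ℝ) (x : k → ℝ) :
    nsq (A *ᵥ x) ≤ (∑ i, ∑ j, A i j ^ 2) * nsq x := by
  rw [nsq, sum_mul]
  exact sum_le_sum fun i _ => sum_mul_sq_le_sq_mul_sq _ _ _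

section RIP

variable {n d : ℕ} {Φ : Matrix (Fin n) (Fin d) ℝ}

lemma exists_satRIP (Φ : Matrix (Fin n) (Fin d) ℝ) (t : ℕ) : ∃ δ, 0 ≤ δ ∧ satRIP Φ t δ := by
  have hC : 0 ≤ ∑ i, ∑ j, Φ i j ^ 2 := by positivity
  refine ⟨1 + ∑ i, ∑ j, Φ i j ^ 2, by positivity, fun x _ => ⟨?_, ?_⟩⟩
  · nlinarith [nsq_nonneg x, nsq_nonneg (Φ *ᵥ x)]
  · nlinarith [nsq_nonneg x, nsq_mulVec_le Φ x]

lemma satRIP_ripConst (Φ : Matrix (Fin n) (Fin d) ℝ) (t : ℕ) : satRIP Φ t (ripConst Φ t) := by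
  have hclosed : IsClosed {δ : ℝ | 0 ≤ δ ∧ satRIP Φ t δ} := by
    simp only [satRIP, Set.ofPred_and, Set.ofPred_forall]
    refine (isClosed_le continuous_const continuous_id).inter
      (isClosed_iInter fun x => isClosed_iInter fun _ =>
        (isClosed_le (by fun_prop) continuous_const).inter
        (isClosed_le continuous_const (by fun_prop)))
  exact (hclosed.csInf_mem (exists_satRIP Φ t) ⟨0, fun _ h => h.1⟩).2

lemma ripConst_mono (Φ : Matrix (Fin n) (Fin d) ℝ) {t t' : ℕ} (h : t ≤ t') :
    ripConst Φ t ≤ ripConst Φ t' :=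
  csInf_le_csInf ⟨0, fun _ hδ => hδ.1⟩ (exists_satRIP Φ t')
    fun _ hδ => ⟨hδ.1, fun x hx => hδ.2 x (hx.trans h)⟩

lemma sparsity_le_card {v : Fin d → ℝ} {s : Finset (Fin d)} (h : ∀ i ∉ s, v i = 0) :
    sparsity v ≤ s.card :=
  card_le_card fun i hi => by
    by_contra hs
    exact (mem_filter.1 hi).2 (h i hs)

lemma satRIP.dotProduct_mulVec_le {t : ℕ} {δ : ℝ} (h : satRIP Φ t δ) {u v : Fin d → ℝ}
    (hadd : sparsity (u + v) ≤ t) (hsub : sparsity (u - v) ≤ t) :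
    (Φ *ᵥ u) ⬝ᵥ (Φ *ᵥ v) ≤ u ⬝ᵥ v + δ / 2 * (nsq u + nsq v) := by
  have hΦ := nsq_add_sub_nsq_sub (Φ *ᵥ u) (Φ *ᵥ v)
  rw [← mulVec_add, ← mulVec_sub] at hΦ
  have hsum := congrArg (δ * ·) (nsq_add_add_nsq_sub u v)
  linarith [(h _ hadd).2, (h _ hsub).1, nsq_add_sub_nsq_sub u v]

end RIP

section ZeroExtend

variable {ι : Type*} [DecidableEq ι] {s : Finset ι}

def zeroExtend (s : Finset ι) (x : s → ℝ) : ι → ℝ :=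
  fun i => if h : i ∈ s then x ⟨i, h⟩ else 0

lemma zeroExtend_of_notMem (x : s → ℝ) {i : ι} (h : i ∉ s) : zeroExtend s x i = 0 := dif_neg h

lemma sum_zeroExtend [Fintype ι] (g : ι → ℝ → ℝ) (hg : ∀ i, g i 0 = 0) (x : s → ℝ) :
    ∑ i, g i (zeroExtend s x i) = ∑ i : s, g i (x i) := by
  rw [← sum_subset (subset_univ s) fun i _ hi => by rw [zeroExtend_of_notMem x hi, hg],
    ← sum_attach s, univ_eq_attach]
  exact sum_congr rfl fun i _ => by simp [zeroExtend, i.2]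

lemma nsq_zeroExtend [Fintype ι] (x : s → ℝ) : nsq (zeroExtend s x) = nsq x :=
  sum_zeroExtend (fun _ a => a ^ 2) (fun _ => zero_pow two_ne_zero) x

end ZeroExtend

section Columns

variable {n d : ℕ} {Φ : Matrix (Fin n) (Fin d) ℝ}

lemma cols_mulVec (Φ : Matrix (Fin n) (Fin d) ℝ) (s : Finset (Fin d)) (x : s → ℝ) :
    cols Φ s *ᵥ x = Φ *ᵥ zeroExtend s x := by
  funext j
  exact (sum_zeroExtend (fun i a => Φ j i * a) (fun _ => mul_zero _) x).symm

lemma satRIP.nsq_cols_mulVec {s : Finset (Fin d)} {δ : ℝ} (h : satRIP Φ s.card δ) (x : s → ℝ) :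
    (1 - δ) * nsq x ≤ nsq (cols Φ s *ᵥ x) ∧ nsq (cols Φ s *ᵥ x) ≤ (1 + δ) * nsq x := by
  rw [cols_mulVec, ← nsq_zeroExtend x]
  exact h _ (sparsity_le_card fun _ => zeroExtend_of_notMem x)

lemma satRIP.cols_mulVec_dotProduct_le {s₁ s₂ : Finset (Fin d)} (hdisj : Disjoint s₁ s₂) {δ : ℝ}
    (h : satRIP Φ (s₁.card + s₂.card) δ) (x : s₁ → ℝ) (y : s₂ → ℝ) :
    (cols Φ s₁ *ᵥ x) ⬝ᵥ (cols Φ s₂ *ᵥ y) ≤ δ * l2 x * l2 y := by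
  have hsupp : ∀ a b : ℝ,
      sparsity (a • zeroExtend s₁ x + b • zeroExtend s₂ y) ≤ s₁.card + s₂.card := by
    intro a b
    rw [← card_union_of_disjoint hdisj]
    refine sparsity_le_card fun i hi => ?_
    rw [mem_union, not_or] at hi
    simp [zeroExtend_of_notMem x hi.1, zeroExtend_of_notMem y hi.2]
  have horth : zeroExtend s₁ x ⬝ᵥ zeroExtend s₂ y = 0 := by
    refine sum_eq_zero fun i _ => ?_
    by_cases hi : i ∈ s₁
    · rw [zeroExtend_of_notMem y (disjoint_left.1 hdisj hi), mul_zero]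
    · rw [zeroExtend_of_notMem x hi, zero_mul]
  -- scaling `x` by `‖y‖` and `y` by `‖x‖` balances the two sides of the AM-GM type bound
  have hscaled := h.dotProduct_mulVec_le (hsupp (l2 y) (l2 x))
    (by simpa [sub_eq_add_neg] using hsupp (l2 y) (-l2 x))
  simp only [mulVec_smul, smul_dotProduct, dotProduct_smul, horth, nsq_smul, nsq_zeroExtend,
    ← l2_sq x, ← l2_sq y, smul_eq_mul] at hscaled
  rcases (mul_nonneg (l2_nonneg x) (l2_nonneg y)).eq_or_lt with h0 | hpos
  · rcases mul_eq_zero.1 h0.symm with hx | hy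
    · rw [hx, l2_eq_zero_iff.1 hx, mulVec_zero, zero_dotProduct, mul_zero, zero_mul]
    · rw [hy, l2_eq_zero_iff.1 hy, mulVec_zero, dotProduct_zero, mul_zero]
  · refine le_of_mul_le_mul_left ?_ hpos
    rw [cols_mulVec, cols_mulVec]
    linarith

end Columns

section Quadratic

variable {m k l : Type*} [Fintype m] [Fintype k] [Fintype l]

lemma dotProduct_transpose_mul_self_mulVec (B : Matrix m k ℝ) (z : k → ℝ) :
    z ⬝ᵥ (Bᵀ * B) *ᵥ z = nsq (B *ᵥ z) := by
  rw [← mulVec_mulVec, dotProduct_mulVec, vecMul_transpose, nsq_eq_dotProduct]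

lemma dotProduct_transpose_mul_sub_mul_mulVec [DecidableEq m] (A : Matrix m k ℝ)
    (B : Matrix m l ℝ) (G : Matrix l l ℝ) (x : k → ℝ) :
    x ⬝ᵥ (Aᵀ * (1 - B * G * Bᵀ) * A) *ᵥ x =
      nsq (A *ᵥ x) - (Bᵀ *ᵥ A *ᵥ x) ⬝ᵥ G *ᵥ Bᵀ *ᵥ A *ᵥ x := by
  rw [← mulVec_mulVec, ← mulVec_mulVec, dotProduct_mulVec, vecMul_transpose, sub_mulVec,
    one_mulVec, dotProduct_sub, ← nsq_eq_dotProduct, ← mulVec_mulVec, ← mulVec_mulVec,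
    dotProduct_mulVec _ B, ← mulVec_transpose]

variable [DecidableEq k]

lemma isUnit_of_coercive {G : Matrix k k ℝ} {c : ℝ} (hc : 0 < c)
    (hG : ∀ z, c * nsq z ≤ z ⬝ᵥ G *ᵥ z) : IsUnit G := by
  refine mulVec_injective_iff_isUnit.1 fun z₁ z₂ hz => ?_
  have hzero : G *ᵥ (z₁ - z₂) = 0 := by rw [mulVec_sub, hz, sub_self]
  have hle := hG (z₁ - z₂)
  rw [hzero, dotProduct_zero] at hle
  have hnsq : nsq (z₁ - z₂) = 0 :=
    le_antisymm (nonpos_of_mul_nonpos_right hle hc) (nsq_nonneg _)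
  exact sub_eq_zero.1 (nsq_eq_zero_iff.1 hnsq)

/-- With `z = G⁻¹ w`, the form `w ⬝ G⁻¹ w = w ⬝ z` dominates `c ‖z‖²` and, by Cauchy–Schwarz,
is at most `‖w‖ ‖z‖`. -/
lemma dotProduct_inv_mulVec_le {G : Matrix k k ℝ} {c : ℝ} (hc : 0 < c)
    (hG : ∀ z, c * nsq z ≤ z ⬝ᵥ G *ᵥ z) (w : k → ℝ) :
    0 ≤ w ⬝ᵥ G⁻¹ *ᵥ w ∧ w ⬝ᵥ G⁻¹ *ᵥ w ≤ nsq w / c := by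
  set z := G⁻¹ *ᵥ w
  have hGz : G *ᵥ z = w := by
    rw [mulVec_mulVec, mul_nonsing_inv _ ((isUnit_iff_isUnit_det G).1 (isUnit_of_coercive hc hG)),
      one_mulVec]
  have hlow : c * nsq z ≤ w ⬝ᵥ z := by rw [← hGz, dotProduct_comm]; exact hG z
  have hup : w ⬝ᵥ z ≤ l2 w * l2 z := dotProduct_le_l2_mul_l2 w z
  refine ⟨(mul_nonneg hc.le (nsq_nonneg z)).trans hlow, (le_div_iff₀ hc).2 ?_⟩
  rw [← l2_sq] at hlow ⊢
  have hcz : c * l2 z ≤ l2 w := by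
    rcases (l2_nonneg z).eq_or_lt with h0 | hpos
    · rw [← h0, mul_zero]; exact l2_nonneg w
    · exact le_of_mul_le_mul_right (by linarith) hpos
  calc w ⬝ᵥ z * c ≤ l2 w * (c * l2 z) := by nlinarith
    _ ≤ l2 w ^ 2 := by nlinarith [l2_nonneg w]

end Quadratic

section Loewner

variable {k : Type*} [Fintype k] [DecidableEq k] {M : Matrix k k ℝ} {c : ℝ}

lemma posSemidef_sub_smul_one (hM : Mᵀ = M) (h : ∀ x, c * nsq x ≤ x ⬝ᵥ M *ᵥ x) :
    (M - c • 1).PosSemidef := by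
  refine .of_dotProduct_mulVec_nonneg ?_ fun x => ?_
  · rw [IsHermitian, conjTranspose_eq_transpose_of_trivial, transpose_sub, hM,
      transpose_smul, transpose_one]
  · rw [star_trivial, sub_mulVec, dotProduct_sub, smul_mulVec, one_mulVec, dotProduct_smul,
      ← nsq_eq_dotProduct, smul_eq_mul, sub_nonneg]
    exact h x

lemma posSemidef_smul_one_sub (hM : Mᵀ = M) (h : ∀ x, x ⬝ᵥ M *ᵥ x ≤ c * nsq x) :
    (c • 1 - M).PosSemidef := by
  have hneg := posSemidef_sub_smul_one (M := -M) (c := -c) (by rw [transpose_neg, hM])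
    fun x => by simpa only [neg_mulVec, dotProduct_neg, neg_mul, neg_le_neg_iff] using h x
  rwa [neg_smul, sub_neg_eq_add, neg_add_eq_sub] at hneg

end Loewner

section Projection

variable {n d : ℕ} {Φ : Matrix (Fin n) (Fin d) ℝ}

lemma transpose_proj (Φ : Matrix (Fin n) (Fin d) ℝ) (s : Finset (Fin d)) :
    (proj Φ s)ᵀ = proj Φ s := by
  rw [proj, transpose_mul, transpose_mul, transpose_transpose, transpose_nonsing_inv,
    transpose_mul, transpose_transpose, Matrix.mul_assoc]

def residualGram (Φ : Matrix (Fin n) (Fin d) ℝ) (s₁ s₂ : Finset (Fin d)) :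
    Matrix s₁ s₁ ℝ :=
  (cols Φ s₁)ᵀ * (1 - proj Φ s₂) * cols Φ s₁

lemma transpose_residualGram (Φ : Matrix (Fin n) (Fin d) ℝ) (s₁ s₂ : Finset (Fin d)) :
    (residualGram Φ s₁ s₂)ᵀ = residualGram Φ s₁ s₂ := by
  rw [residualGram, transpose_mul, transpose_mul, transpose_transpose, transpose_sub, transpose_one,
    transpose_proj, Matrix.mul_assoc]

lemma satRIP.nsq_transpose_cols_mulVec_le {s₁ s₂ : Finset (Fin d)} (hdisj : Disjoint s₁ s₂)
    {δ : ℝ} (h : satRIP Φ (s₁.card + s₂.card) δ) (x : s₁ → ℝ) :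
    nsq ((cols Φ s₂)ᵀ *ᵥ cols Φ s₁ *ᵥ x) ≤ δ ^ 2 * nsq x := by
  set w := (cols Φ s₂)ᵀ *ᵥ cols Φ s₁ *ᵥ x
  have hw : l2 w ^ 2 ≤ δ * l2 x * l2 w := by
    calc l2 w ^ 2 = (cols Φ s₁ *ᵥ x) ⬝ᵥ (cols Φ s₂ *ᵥ w) := by
          rw [l2_sq, nsq_eq_dotProduct, dotProduct_mulVec, vecMul_transpose, dotProduct_comm]
      _ ≤ δ * l2 x * l2 w := h.cols_mulVec_dotProduct_le hdisj x w
  rw [← l2_sq, ← l2_sq]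
  rcases (l2_nonneg w).eq_or_lt with h0 | hpos
  · rw [← h0, sq, zero_mul]; positivity
  · have hle : l2 w ≤ δ * l2 x := le_of_mul_le_mul_right (by linarith) hpos
    rw [← mul_pow]
    exact pow_le_pow_left₀ (l2_nonneg w) hle 2

lemma satRIP.residualGram_quadForm_bounds {s₁ s₂ : Finset (Fin d)} (hdisj : Disjoint s₁ s₂)
    {δ δ₁ δ₂ : ℝ} (h : satRIP Φ (s₁.card + s₂.card) δ) (h₁ : satRIP Φ s₁.card δ₁)
    (h₂ : satRIP Φ s₂.card δ₂) (hδ₂ : δ₂ < 1) (x : s₁ → ℝ) :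
    (1 - δ₁ - δ ^ 2 / (1 - δ₂)) * nsq x ≤ x ⬝ᵥ residualGram Φ s₁ s₂ *ᵥ x ∧
      x ⬝ᵥ residualGram Φ s₁ s₂ *ᵥ x ≤ (1 + δ₁) * nsq x := by
  have hc : 0 < 1 - δ₂ := sub_pos.2 hδ₂
  have hGram : ∀ z, (1 - δ₂) * nsq z ≤ z ⬝ᵥ ((cols Φ s₂)ᵀ * cols Φ s₂) *ᵥ z := fun z => by
    rw [dotProduct_transpose_mul_self_mulVec]; exact (h₂.nsq_cols_mulVec z).1
  obtain ⟨hinv_nonneg, hinv_le⟩ :=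
    dotProduct_inv_mulVec_le hc hGram ((cols Φ s₂)ᵀ *ᵥ cols Φ s₁ *ᵥ x)
  have hw := h.nsq_transpose_cols_mulVec_le hdisj x
  have hAx := h₁.nsq_cols_mulVec x
  rw [residualGram, proj, dotProduct_transpose_mul_sub_mul_mulVec]
  refine ⟨?_, by linarith⟩
  have hw_div : nsq ((cols Φ s₂)ᵀ *ᵥ cols Φ s₁ *ᵥ x) / (1 - δ₂) ≤ δ ^ 2 / (1 - δ₂) * nsq x := by
    rw [div_mul_eq_mul_div]; exact div_le_div_of_nonneg_right hw hc.le
  linarith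

end Projection

/-- for disjoint `s₁, s₂` with `δ_{k₁+k₂} ≤ 1/2`,
`(1 − δ_{k₁} − δ_{k₁+k₂}²/(1 − δ_{k₂})) I ⪯ Φ_{s₁}ᵀ(I − P{Φ_{s₂}})Φ_{s₁} ⪯ (1 + δ_{k₁}) I`. -/
theorem stmt5 {n d : ℕ} (Φ : Matrix (Fin n) (Fin d) ℝ) (s₁ s₂ : Finset (Fin d))
    (hdisj : Disjoint s₁ s₂)
    (hδ : ripConst Φ (s₁.card + s₂.card) ≤ 1 / 2) :
    ((cols Φ s₁)ᵀ * (1 - proj Φ s₂) * cols Φ s₁ -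
      (1 - ripConst Φ s₁.card -
        ripConst Φ (s₁.card + s₂.card) ^ 2 / (1 - ripConst Φ s₂.card)) •
        (1 : Matrix {i // i ∈ s₁} {i // i ∈ s₁} ℝ)).PosSemidef ∧
    ((1 + ripConst Φ s₁.card) • (1 : Matrix {i // i ∈ s₁} {i // i ∈ s₁} ℝ) -
      (cols Φ s₁)ᵀ * (1 - proj Φ s₂) * cols Φ s₁).PosSemidef := by
  have hδ₂ : ripConst Φ s₂.card < 1 :=
    (ripConst_mono Φ (Nat.le_add_left _ _)).trans_lt (hδ.trans_lt (by norm_num))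
  have hbounds := (satRIP_ripConst Φ _).residualGram_quadForm_bounds hdisj
    (satRIP_ripConst Φ _) (satRIP_ripConst Φ _) hδ₂
  exact ⟨posSemidef_sub_smul_one (transpose_residualGram Φ s₁ s₂) fun x => (hbounds x).1,
    posSemidef_smul_one_sub (transpose_residualGram Φ s₁ s₂) fun x => (hbounds x).2⟩
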